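/- arXiv:2401.16675 — 4 statements merged into one kernel-verified Lean document; each statement's English description precedes it below -/
import Mathlib

section
/- Let A : Matrix (Fin m) (Fin k) ℝ with A r s ≠ 0, let à be the matrix obtained by pivoting A at (r,s), and let u ∈ ℝ^m, v ∈ ℝ^k. Define ũ from u by replacing its r-th entry with v s, and ṽ from v by replacing its s-th entry with u r. Then u = A.mulVec v if and only if ũ = Ã.mulVec ṽ. -/
/-!
Row `r` of `u = A v` is solved for `v s` as `(u r - ∑_{j ≠ s} A r j v j) / A r s`, which is
exactly row `r` of `Ã ṽ`; substituting this value of `v s` into the other rows gives the remaining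
rows of `Ã ṽ`. This proves the forward implication. Pivoting twice at the same entry restores `A`,
so the converse is the forward implication for `Ã`, whose pivot entry `1 / A r s` is nonzero.
-/

/-- Pivoting a dictionary coefficient matrix at entry `(r, s)`. -/
noncomputable def pivotM {m k : ℕ} (A : Matrix (Fin m) (Fin k) ℝ) (r : Fin m) (s : Fin k) :
    Matrix (Fin m) (Fin k) ℝ :=
  fun i j =>
    if i = r then (if j = s then 1 / A r s else -(A r j) / A r s)
    else (if j = s then A i s / A r s else A i j - A i s * A r j / A r s)

open Finset Matrix

theorem dotProduct_update_eq_add_sum_erase {n R : Type*} [Fintype n] [DecidableEq n]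
    [NonUnitalNonAssocSemiring R] (f w : n → R) (s : n) (x : R) :
    f ⬝ᵥ Function.update w s x = f s * x + ∑ j ∈ univ.erase s, f j * w j := by
  rw [dotProduct, ← add_sum_erase _ _ (mem_univ s), Function.update_self]
  congr 1
  exact sum_congr rfl fun j hj => by rw [Function.update_of_ne (ne_of_mem_erase hj)]

theorem mulVec_apply_eq_add_sum_erase {m n R : Type*} [Fintype n] [DecidableEq n]
    [NonUnitalNonAssocSemiring R] (A : Matrix m n R) (v : n → R) (i : m) (s : n) :
    (A *ᵥ v) i = A i s * v s + ∑ j ∈ univ.erase s, A i j * v j := by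
  rw [mulVec, ← dotProduct_update_eq_add_sum_erase, Function.update_eq_self]

section Pivot

variable {m k : ℕ} (A : Matrix (Fin m) (Fin k) ℝ) (r : Fin m) (s : Fin k)

theorem pivotM_apply_self : pivotM A r s r s = (A r s)⁻¹ := by
  simp [pivotM]

theorem pivotM_pivotM (h : A r s ≠ 0) : pivotM (pivotM A r s) r s = A := by
  ext i j
  by_cases hi : i = r <;> by_cases hj : j = s <;> simp [pivotM, hi, hj, h]
  all_goals field_simp; ring

theorem pivotM_mulVec_update_apply_self (v : Fin k → ℝ) (x : ℝ) :
    (pivotM A r s *ᵥ Function.update v s x) r =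
      (x - ∑ j ∈ univ.erase s, A r j * v j) / A r s := by
  rw [mulVec, dotProduct_update_eq_add_sum_erase]
  have hrow : ∀ j ∈ univ.erase s, pivotM A r s r j * v j = -(A r j * v j) / A r s :=
    fun j hj => by simp only [pivotM, ↓reduceIte, ne_of_mem_erase hj]; ring
  rw [sum_congr rfl hrow, ← sum_div, sum_neg_distrib]
  simp only [pivotM, ↓reduceIte]
  ring

theorem pivotM_mulVec_update_apply_of_ne (v : Fin k → ℝ) (x : ℝ) {i : Fin m} (hi : i ≠ r) :
    (pivotM A r s *ᵥ Function.update v s x) i =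
      ∑ j ∈ univ.erase s, A i j * v j + A i s * (x - ∑ j ∈ univ.erase s, A r j * v j) / A r s := by
  rw [mulVec, dotProduct_update_eq_add_sum_erase]
  have hrow : ∀ j ∈ univ.erase s,
      pivotM A r s i j * v j = A i j * v j - A i s / A r s * (A r j * v j) :=
    fun j hj => by simp only [pivotM, hi, ne_of_mem_erase hj, ↓reduceIte]; ring
  rw [sum_congr rfl hrow, sum_sub_distrib, ← mul_sum]
  simp only [pivotM, hi, ↓reduceIte]
  ring

theorem update_eq_pivotM_mulVec_update (h : A r s ≠ 0) {u : Fin m → ℝ} {v : Fin k → ℝ}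
    (hu : u = A *ᵥ v) :
    Function.update u r (v s) = pivotM A r s *ᵥ Function.update v s (u r) := by
  ext i
  rcases eq_or_ne i r with rfl | hi
  · rw [Function.update_self, pivotM_mulVec_update_apply_self, hu,
      mulVec_apply_eq_add_sum_erase A v i s]
    field_simp
    ring
  · rw [Function.update_of_ne hi, pivotM_mulVec_update_apply_of_ne A r s v _ hi, hu,
      mulVec_apply_eq_add_sum_erase A v i s, mulVec_apply_eq_add_sum_erase A v r s]
    field_simp
    ring

end Pivot

/-- Pivoting preserves the solution set of the dictionary `x_B = A x_N`. -/
theorem pivot_preserves_solutions {m k : ℕ} (A : Matrix (Fin m) (Fin k) ℝ)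
    (r : Fin m) (s : Fin k) (h : A r s ≠ 0) (u : Fin m → ℝ) (v : Fin k → ℝ) :
    u = A.mulVec v ↔
      Function.update u r (v s) = (pivotM A r s).mulVec (Function.update v s (u r)) := by
  refine ⟨update_eq_pivotM_mulVec_update A r s h, fun hp => ?_⟩
  have hp' : pivotM A r s r s ≠ 0 := by simpa [pivotM_apply_self] using h
  simpa [pivotM_pivotM A r s h] using update_eq_pivotM_mulVec_update _ r s hp' hp
end

section
/- Suppose a dictionary with index sets B (basis) and N (co-basis, excluding g) and coefficient matrix A satisfies: (i) r < s with r ∈ N, s ∈ B and A s r ≠ 0; (ii) A s j = 0 for all j ∈ N with r < j < s; (iii) for all j ∈ N with j < s and all i ∈ B with i < j, A i j = 0. Then in the dictionary Ã obtained by pivoting (s, r), the Zero rule selects exactly the entry (r, s); conversely, if the Zero rule applied to Ã selects (r, s), then conditions (i)–(iii) hold for A. -/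
/-- Pivoting a dictionary whose rows are indexed by the basis `B` and columns by the
co-basis `N` at the entry of basic index `rb` and co-basic index `sn`: after the pivot,
`sn` becomes a row index and `rb` a column index. -/
noncomputable def pivotD (A : ℕ → ℕ → ℝ) (rb sn : ℕ) : ℕ → ℕ → ℝ :=
  fun i j =>
    if i = sn then (if j = rb then 1 / A rb sn else -(A rb j) / A rb sn)
    else (if j = rb then A i sn / A rb sn else A i j - A i sn * A rb j / A rb sn)

/-- The Zero rule on a dictionary with basis `B`, co-basis `N` and coefficients `A`
selects the pair `(r, s)`: `s` is the smallest co-basis index such that some basic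
index `i < s` has `A i s ≠ 0`, and `r` is the smallest such basic index. -/
def ZeroSelect (B N : Finset ℕ) (A : ℕ → ℕ → ℝ) (r s : ℕ) : Prop :=
  r ∈ B ∧ s ∈ N ∧ r < s ∧ A r s ≠ 0 ∧
    (∀ s' ∈ N, (∃ i ∈ B, i < s' ∧ A i s' ≠ 0) → s ≤ s') ∧
    (∀ i ∈ B, i < s → A i s ≠ 0 → r ≤ i)

/-- Proposition "Reversibility": `(s, r)` is a valid reverse of the Zero rule if and
only if conditions (i)–(iii) hold. -/
theorem zero_rule_reversibility (B N : Finset ℕ) (A : ℕ → ℕ → ℝ) (s r : ℕ)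
    (hs : s ∈ B) (hr : r ∈ N) (hdisj : Disjoint B N) :
    ((r < s ∧ A s r ≠ 0) ∧
     (∀ j ∈ N, r < j → j < s → A s j = 0) ∧
     (∀ j ∈ N, j < s → ∀ i ∈ B, i < j → A i j = 0)) ↔
    ZeroSelect (insert r (B.erase s)) (insert s (N.erase r)) (pivotD A s r) r s := by
  have hrB : r ∉ B := fun h => Finset.disjoint_left.mp hdisj h hr
  have hsN : s ∉ N := fun h => Finset.disjoint_left.mp hdisj hs h
  have hrs : r ≠ s := fun h => hrB (h ▸ hs)
  constructor
  · rintro ⟨⟨hlt, hA⟩, hii, hiii⟩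
    refine ⟨Finset.mem_insert_self _ _, Finset.mem_insert_self _ _, hlt, ?_, ?_, ?_⟩
    · simp only [pivotD, if_pos rfl]
      exact one_div_ne_zero hA
    · rintro s' hs' ⟨i, hiB', hilt, hne⟩
      by_contra hle
      push_neg at hle
      have hs'ne : s' ≠ s := ne_of_lt hle
      have hs'N : s' ∈ N := by
        rcases Finset.mem_insert.mp hs' with h | h
        · exact absurd h hs'ne
        · exact Finset.mem_of_mem_erase h
      have hs'r : s' ≠ r := by
        rcases Finset.mem_insert.mp hs' with h | h
        · exact absurd h hs'ne
        · exact Finset.ne_of_mem_erase h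
      apply hne
      by_cases hir : i = r
      · subst hir
        simp only [pivotD, if_pos rfl, if_neg hs'ne]
        rw [hii s' hs'N hilt hle]
        simp
      · have hiB : i ∈ B ∧ i ≠ s := by
          rcases Finset.mem_insert.mp hiB' with h | h
          · exact absurd h hir
          · exact ⟨Finset.mem_of_mem_erase h, Finset.ne_of_mem_erase h⟩
        simp only [pivotD, if_neg hir, if_neg hs'ne]
        rw [hiii s' hs'N hle i hiB.1 hilt]
        rcases lt_trichotomy i r with h | h | h
        · rw [hiii r hr hlt i hiB.1 h]; ring
        · exact absurd h hir
        · rw [hii s' hs'N (h.trans hilt) hle]; ring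
    · intro i hiB' hilt hne
      by_cases hir : i = r
      · exact le_of_eq hir.symm
      · have hiB : i ∈ B := by
          rcases Finset.mem_insert.mp hiB' with h | h
          · exact absurd h hir
          · exact Finset.mem_of_mem_erase h
        by_contra hle
        push_neg at hle
        apply hne
        simp only [pivotD, if_neg hir, if_pos rfl]
        rw [hiii r hr hlt i hiB hle]
        simp
  · rintro ⟨_, _, hlt, hne, ha, hb⟩
    have hA : A s r ≠ 0 := by
      simp only [pivotD, if_pos rfl] at hne
      intro h
      rw [h] at hne
      simp at hne
    refine ⟨⟨hlt, hA⟩, ?_, ?_⟩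
    · intro j hjN hrj hjs
      have hjr : j ≠ r := ne_of_gt hrj
      have hjs' : j ≠ s := ne_of_lt hjs
      by_contra hAsj
      have := ha j (Finset.mem_insert_of_mem (Finset.mem_erase.mpr ⟨hjr, hjN⟩))
        ⟨r, Finset.mem_insert_self _ _, hrj, ?_⟩
      · exact absurd hjs (not_lt.mpr this)
      · simp only [pivotD, if_pos rfl, if_neg hjs']
        exact div_ne_zero (neg_ne_zero.mpr hAsj) hA
    · intro j hjN hjs i hiB hij
      have his : i ≠ s := ne_of_lt (hij.trans hjs)
      have hir : i ≠ r := fun h => hrB (h ▸ hiB)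
      have hiB' : i ∈ insert r (B.erase s) :=
        Finset.mem_insert_of_mem (Finset.mem_erase.mpr ⟨his, hiB⟩)
      have hAir : i < r → A i r = 0 := by
        intro hltr
        have := hb i hiB' (hij.trans hjs) 
        by_contra hAir
        have h2 : pivotD A s r i s ≠ 0 := by
          simp only [pivotD, if_neg hir, if_pos rfl]
          exact div_ne_zero hAir hA
        exact absurd (this h2) (not_le.mpr hltr)
      by_cases hjr : j = r
      · subst hjr
        exact hAir hij
      · have hjs' : j ≠ s := ne_of_lt hjs
        have hjN' : j ∈ insert s (N.erase r) :=
          Finset.mem_insert_of_mem (Finset.mem_erase.mpr ⟨hjr, hjN⟩)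
        have hzero : pivotD A s r i j = 0 := by
          by_contra h
          exact absurd (ha j hjN' ⟨i, hiB', hij, h⟩) (not_le.mpr hjs)
        simp only [pivotD, if_neg hir, if_neg hjs'] at hzero
        rcases lt_trichotomy j r with h | h | h
        · rw [hAir (hij.trans h), zero_mul, zero_div, sub_zero] at hzero
          exact hzero
        · exact absurd h hjr
        · have hAsj : A s j = 0 := by
            have hz2 : pivotD A s r r j = 0 := by
              by_contra hc
              exact absurd (ha j hjN' ⟨r, Finset.mem_insert_self _ _, h, hc⟩)
                (not_le.mpr hjs)
            simp only [pivotD, if_pos rfl, if_neg hjs'] at hz2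
            rcases div_eq_zero_iff.mp hz2 with h' | h'
            · exact neg_eq_zero.mp h'
            · exact absurd h' hA
          rw [hAsj, mul_zero, zero_div, sub_zero] at hzero
          exact hzero
end

section
/- Suppose that starting from some dictionary, the Zero rule is applied repeatedly, and at each step ℓ it pivots entry (r_ℓ, s_ℓ) where s_ℓ is the selected co-basis index. Then the sequence of selected co-basis indices is strictly increasing: s_{ℓ+1} > s_ℓ for every ℓ. -/
/-- Lemma "Index increasing": along any sequence of Zero-rule pivots, the sequence of
selected co-basis indices is strictly increasing. -/
theorem zero_rule_index_increasing (L : ℕ) (B N : ℕ → Finset ℕ) (A : ℕ → ℕ → ℕ → ℝ)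
    (r s : ℕ → ℕ)
    (hsel : ∀ ℓ, ℓ < L → ZeroSelect (B ℓ) (N ℓ) (A ℓ) (r ℓ) (s ℓ))
    (hB : ∀ ℓ, ℓ + 1 < L → B (ℓ + 1) = insert (s ℓ) ((B ℓ).erase (r ℓ)))
    (hN : ∀ ℓ, ℓ + 1 < L → N (ℓ + 1) = insert (r ℓ) ((N ℓ).erase (s ℓ)))
    (hA : ∀ ℓ, ℓ + 1 < L → A (ℓ + 1) = pivotD (A ℓ) (r ℓ) (s ℓ)) :
    ∀ ℓ, ℓ + 1 < L → s ℓ < s (ℓ + 1) := by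
  intro ℓ hℓ
  obtain ⟨hr0B, hs0N, hrs0, hA0, hmin_s0, hmin_r0⟩ := hsel ℓ (Nat.lt_of_succ_lt hℓ)
  obtain ⟨hr1B, hs1N, hrs1, hA1, -, -⟩ := hsel (ℓ + 1) hℓ
  by_contra hcon
  push_neg at hcon
  rw [hN ℓ hℓ] at hs1N
  rw [hB ℓ hℓ] at hr1B
  rw [hA ℓ hℓ] at hA1
  set i := r (ℓ + 1) with hi
  set j := s (ℓ + 1) with hj
  have hine : i ≠ s ℓ := by omega
  have hiB : i ∈ B ℓ := by
    rcases Finset.mem_insert.mp hr1B with h' | h'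
    · exact absurd h' hine
    · exact Finset.mem_of_mem_erase h'
  apply hA1
  unfold pivotD
  rw [if_neg hine]
  rcases Finset.mem_insert.mp hs1N with hjr | hjN
  · -- j = r ℓ
    rw [if_pos hjr]
    have hiz : A ℓ i (s ℓ) = 0 := by
      by_contra hne
      have := hmin_r0 i hiB (by omega) hne
      omega
    rw [hiz]; ring
  · have hjne : j ≠ s ℓ := Finset.ne_of_mem_erase hjN
    have hjN' : j ∈ N ℓ := Finset.mem_of_mem_erase hjN
    have hjlt : j < s ℓ := lt_of_le_of_ne hcon hjne
    have hzero : ∀ i' ∈ B ℓ, i' < j → A ℓ i' j = 0 := by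
      intro i' hi' hlt
      by_contra hne
      have := hmin_s0 j hjN' ⟨i', hi', hlt, hne⟩
      omega
    by_cases hjnr : j = r ℓ
    · rw [if_pos hjnr]
      have hiz : A ℓ i (s ℓ) = 0 := by
        by_contra hne
        have := hmin_r0 i hiB (by omega) hne
        omega
      rw [hiz]; ring
    rw [if_neg hjnr]
    have hij : A ℓ i j = 0 := hzero i hiB hrs1
    by_cases his : A ℓ i (s ℓ) = 0
    · rw [hij, his]; ring
    · have hri : r ℓ ≤ i := hmin_r0 i hiB (by omega) his
      have hrj : A ℓ (r ℓ) j = 0 := hzero (r ℓ) hr0B (by omega)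
      rw [hij, hrj]; ring
end

section
/- Let A be the coefficient matrix of a dictionary with basis B ∪ {f} and co-basis N ∪ {g}, and let à be obtained from A by pivoting on (s,r). Suppose s ∈ B, r ∈ N, and that the following conditions all hold: (a1) A s g > 0, A s r > 0, and A s j ≥ 0 for all j ∈ N with j < s; (a2) for all indices j < r: if j ∈ B then A j g * A s r ≥ A j r * A s g, and if j ∈ N then A f r * A s j ≥ A f j * A s r; (a3) if s < r then A f r ≤ 0. Then the Criss-Cross rule applied to à selects exactly the pivot (r, s). -/
/-- The Criss-Cross rule on a dictionary with basis `B`, co-basis `N`, objective row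
`f`, constant column `g`, coefficients `A` selects the pivot `(r, s)`: let `i` be the
smallest primal- or dual-infeasible index; if `i ∈ B` then `r = i` and `s` is minimal
with `A r s > 0`; if `i ∈ N` then `s = i` and `r` is minimal with `A r s < 0`. -/
def CrissCrossSelect (B N : Finset ℕ) (f g : ℕ) (A : ℕ → ℕ → ℝ) (r s : ℕ) : Prop :=
  ∃ i : ℕ, ((i ∈ B ∧ A i g < 0) ∨ (i ∈ N ∧ 0 < A f i)) ∧
    (∀ i' : ℕ, ((i' ∈ B ∧ A i' g < 0) ∨ (i' ∈ N ∧ 0 < A f i')) → i ≤ i') ∧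
    ((i ∈ B ∧ r = i ∧ s ∈ N ∧ 0 < A r s ∧ ∀ j ∈ N, 0 < A r j → s ≤ j) ∨
     (i ∈ N ∧ s = i ∧ r ∈ B ∧ A r s < 0 ∧ ∀ i' ∈ B, A i' s < 0 → r ≤ i'))

/-- Case (a) of the corrected if-and-only-if valid-reverse condition for the
Criss-Cross rule: conditions (a1)-(a3) imply that after pivoting `(s, r)`, the
Criss-Cross rule selects exactly `(r, s)`. -/
theorem criss_cross_valid_reverse_case_a (B N : Finset ℕ) (f g : ℕ) (A : ℕ → ℕ → ℝ)
    (s r : ℕ) (hs : s ∈ B) (hr : r ∈ N) (hdisj : Disjoint B N)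
    (hfB : f ∉ B) (hfN : f ∉ N) (hgB : g ∉ B) (hgN : g ∉ N)
    (ha1g : 0 < A s g) (ha1r : 0 < A s r)
    (ha1 : ∀ j ∈ N, j < s → 0 ≤ A s j)
    (ha2B : ∀ j ∈ B, j < r → A j r * A s g ≤ A j g * A s r)
    (ha2N : ∀ j ∈ N, j < r → A f j * A s r ≤ A f r * A s j)
    (ha3 : s < r → A f r ≤ 0) :
    CrissCrossSelect (insert r (B.erase s)) (insert s (N.erase r)) f g
      (pivotD A s r) r s := by

  have hsr : s ≠ r := fun h => (Finset.disjoint_left.mp hdisj hs) (h ▸ hr)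
  have hfr : f ≠ r := fun h => hfN (h ▸ hr)
  have hgs : g ≠ s := fun h => hgB (h ▸ hs)
  refine ⟨r, Or.inl ⟨Finset.mem_insert_self _ _, ?_⟩, ?_,
    Or.inl ⟨Finset.mem_insert_self _ _, rfl, Finset.mem_insert_self _ _, ?_, ?_⟩⟩
  · simp only [pivotD, if_pos rfl, if_neg hgs]
    exact div_neg_of_neg_of_pos (neg_lt_zero.mpr ha1g) ha1r
  · rintro i' (⟨hi'B, hi'g⟩ | ⟨hi'N, hi'f⟩)
    · by_contra hcon
      push_neg at hcon
      have hi'r : i' ≠ r := ne_of_lt hcon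
      rw [Finset.mem_insert] at hi'B
      rcases hi'B with rfl | hi'B
      · exact hi'r rfl
      have hi'B' := Finset.mem_of_mem_erase hi'B
      have h2 := ha2B i' hi'B' hcon
      simp only [pivotD, if_neg hi'r, if_neg hgs] at hi'g
      have hle : A i' r * A s g / A s r ≤ A i' g := by
        rw [div_le_iff₀ ha1r]; exact h2
      linarith
    · by_contra hcon
      push_neg at hcon
      rw [Finset.mem_insert] at hi'N
      rcases hi'N with rfl | hi'N
      · have h3 := ha3 hcon
        simp only [pivotD, if_neg hfr, if_pos rfl, if_true] at hi'f
        have := div_nonpos_of_nonpos_of_nonneg h3 ha1r.le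
        linarith
      · have hi'r : i' ≠ r := Finset.ne_of_mem_erase hi'N
        have hi'N' := Finset.mem_of_mem_erase hi'N
        have hi's : i' ≠ s := by rintro rfl; exact Finset.disjoint_left.mp hdisj hs hi'N'
        have h2 := ha2N i' hi'N' hcon
        simp only [pivotD, if_neg hfr, if_neg hi's] at hi'f
        rw [sub_pos, div_lt_iff₀ ha1r] at hi'f
        linarith
  · simp only [pivotD, if_pos rfl]
    exact one_div_pos.mpr ha1r
  · intro j hj hpos
    by_contra hcon
    push_neg at hcon
    have hjs : j ≠ s := ne_of_lt hcon
    rw [Finset.mem_insert] at hj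
    rcases hj with rfl | hj
    · exact hjs rfl
    have hjN := Finset.mem_of_mem_erase hj
    have h1 := ha1 j hjN hcon
    simp only [pivotD, if_pos rfl, if_neg hjs, if_true] at hpos
    have : -(A s j) / A s r ≤ 0 :=
      div_nonpos_of_nonpos_of_nonneg (neg_nonpos.mpr h1) ha1r.le
    linarith
end
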